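/- Let $z:(x_1,x_2)\to(0,\infty)$ be the maximal solution of $z''/(1+z'^2)=-2/z$ with $z(x_0)=z_0$, $z'(x_0)=0$. Then for $x > x_0$ in the domain, $z$ satisfies $z' = -\sqrt{(z_0/z)^4 - 1}$, i.e., $z$ solves a first-order separable ODE determined by the first integral. -/

import Mathlib

open Set

/-- `z` is a positive solution of `z''/(1+z'^2) = -2/z` on the interval `(x1, x2)`. -/
def IsSol (x1 x2 : ℝ) (z : ℝ → ℝ) : Prop :=
  (∀ x ∈ Ioo x1 x2, 0 < z x) ∧
  (∀ x ∈ Ioo x1 x2, DifferentiableAt ℝ z x) ∧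
  (∀ x ∈ Ioo x1 x2, DifferentiableAt ℝ (deriv z) x) ∧
  (∀ x ∈ Ioo x1 x2, deriv (deriv z) x / (1 + (deriv z x) ^ 2) = -2 / z x)

/-- `z` is a maximal solution: it admits no extension to a strictly larger interval. -/
def IsMaxSol (x1 x2 : ℝ) (z : ℝ → ℝ) : Prop :=
  x1 < x2 ∧ IsSol x1 x2 z ∧
  ∀ y1 y2 : ℝ, ∀ w : ℝ → ℝ, IsSol y1 y2 w → Ioo x1 x2 ⊆ Ioo y1 y2 →
    EqOn w z (Ioo x1 x2) → Ioo y1 y2 = Ioo x1 x2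


/-! `z⁴(1 + z'²)` is a first integral: its derivative is `4z³z'(1 + z'² + z z''/2)`, which the
equation kills. At the critical point it equals `z0⁴`. Since `z'' < 0`, `z'` is strictly
decreasing, so `z' < 0` past `x0`, which selects the negative square root. -/

noncomputable def firstIntegral (z : ℝ → ℝ) (x : ℝ) : ℝ :=
  z x ^ 4 * (1 + deriv z x ^ 2)

namespace IsSol

variable {x1 x2 x : ℝ} {z : ℝ → ℝ}

theorem deriv_deriv_eq (hz : IsSol x1 x2 z) (hx : x ∈ Ioo x1 x2) :
    deriv (deriv z) x = -2 / z x * (1 + deriv z x ^ 2) := by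
  have hpos : (0 : ℝ) < 1 + deriv z x ^ 2 := by positivity
  rw [← hz.2.2.2 x hx, div_mul_cancel₀ _ hpos.ne']

theorem deriv_deriv_neg (hz : IsSol x1 x2 z) (hx : x ∈ Ioo x1 x2) :
    deriv (deriv z) x < 0 := by
  rw [hz.deriv_deriv_eq hx]
  exact mul_neg_of_neg_of_pos (div_neg_of_neg_of_pos (by norm_num) (hz.1 x hx)) (by positivity)

theorem strictAntiOn_deriv (hz : IsSol x1 x2 z) : StrictAntiOn (deriv z) (Ioo x1 x2) := by
  refine strictAntiOn_of_deriv_neg (convex_Ioo x1 x2)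
    (fun y hy => (hz.2.2.1 y hy).continuousAt.continuousWithinAt) fun y hy => ?_
  rw [interior_Ioo] at hy
  exact hz.deriv_deriv_neg hy

theorem hasDerivAt_firstIntegral (hz : IsSol x1 x2 z) (hx : x ∈ Ioo x1 x2) :
    HasDerivAt (firstIntegral z) 0 x := by
  have h : HasDerivAt (firstIntegral z) _ x := ((hz.2.1 x hx).hasDerivAt.fun_pow 4).fun_mul
    (((hz.2.2.1 x hx).hasDerivAt.fun_pow 2).const_add 1)
  convert h using 1
  rw [hz.deriv_deriv_eq hx]
  field_simp [(hz.1 x hx).ne']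
  ring

theorem firstIntegral_eq (hz : IsSol x1 x2 z) {y : ℝ} (hx : x ∈ Ioo x1 x2)
    (hy : y ∈ Ioo x1 x2) : firstIntegral z x = firstIntegral z y :=
  isOpen_Ioo.is_const_of_deriv_eq_zero isPreconnected_Ioo
    (fun _ hw => (hz.hasDerivAt_firstIntegral hw).differentiableAt.differentiableWithinAt)
    (fun _ hw => (hz.hasDerivAt_firstIntegral hw).deriv) hx hy

end IsSol

theorem eq_neg_sqrt_of_pow_four_mul_eq {c y d : ℝ} (hy : y ≠ 0) (hd : d < 0)
    (h : y ^ 4 * (1 + d ^ 2) = c ^ 4) : d = -√((c / y) ^ 4 - 1) := by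
  have hsq : (c / y) ^ 4 - 1 = d ^ 2 := by
    rw [div_pow, ← h]
    field_simp
    ring
  rw [hsq, Real.sqrt_sq_eq_abs, abs_of_neg hd, neg_neg]

/-- On the decreasing branch past the maximum `z0`, the maximal solution of
`z''/(1+z'^2) = -2/z` satisfies `z' = -√((z0/z)⁴ - 1)`. -/
theorem stmt18 (x1 x2 x0 z0 : ℝ) (z : ℝ → ℝ)
    (hmaxsol : IsMaxSol x1 x2 z)
    (hx0 : x0 ∈ Ioo x1 x2) (hval : z x0 = z0) (hcrit : deriv z x0 = 0) :
    ∀ x ∈ Ioo x0 x2, deriv z x = -Real.sqrt ((z0 / z x) ^ 4 - 1) := by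
  obtain ⟨-, hz, -⟩ := hmaxsol
  intro x hx
  have hxI : x ∈ Ioo x1 x2 := ⟨hx0.1.trans hx.1, hx.2⟩
  have hneg : deriv z x < 0 := hcrit ▸ hz.strictAntiOn_deriv hx0 hxI hx.1
  have hconst : firstIntegral z x = z0 ^ 4 := by
    rw [hz.firstIntegral_eq hxI hx0, firstIntegral, hval, hcrit]
    ring
  exact eq_neg_sqrt_of_pow_four_mul_eq (hz.1 x hxI).ne' hneg hconst
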